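/- For every integer n ≥ 1 and every real univariate polynomial f of degree at most 2n−1, the Gauss–Chebyshev–Lobatto quadrature formula is exact: ∫_{−1}^{1} f(x) w(x) dx = (1/n) ( (1/2) f(−1) + Σ_{j=1}^{n−1} f(cos(jπ/n)) + (1/2) f(1) ). -/

import Mathlib

/-!
Substituting `x = cos θ` turns the weighted integral into `π⁻¹ ∫₀^π f (cos θ) dθ`, and since
`cos (2π - θ) = cos θ` the Lobatto sum is half the trapezoidal sum over the `2n` equally spaced
nodes `jπ/n` of the whole circle. Both sides are linear in `f`, and the Chebyshev polynomials
`T k`, `k < 2n`, span the polynomials of degree `< 2n`. As `T k (cos θ) = cos (kθ)`, for `k ≠ 0`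
the integral vanishes, and so does the trapezoidal sum: it is the real part of a geometric sum
of the `2n`-th root of unity `exp (ikπ/n) ≠ 1`.
-/

open Real MeasureTheory Polynomial Finset

theorem sum_range_two_mul_comp_cos_mul_pi_div (g : ℝ → ℝ) {n : ℕ} (hn : n ≠ 0) :
    ∑ j ∈ range (2 * n), g (cos (j * π / n)) =
      g 1 + 2 * ∑ j ∈ Ico 1 n, g (cos (j * π / n)) + g (-1) := by
  set a : ℕ → ℝ := fun j ↦ g (cos (j * π / n))
  have hsymm : ∀ j ∈ Ico 1 n, a (2 * n - j) = a j := by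
    intro j hj
    simp only [a, Nat.cast_sub (by grind : j ≤ 2 * n)]
    rw [show ((2 * n : ℕ) - j : ℝ) * π / n = 2 * π - j * π / n by push_cast; field_simp,
      cos_two_pi_sub]
  have hreflect : ∑ j ∈ Ico (n + 1) (2 * n), a j = ∑ j ∈ Ico 1 n, a j := by
    rw [← sum_congr rfl hsymm, sum_Ico_reflect a 1 (by omega)]
    congr 2; omega
  rw [range_eq_Ico, ← sum_Ico_consecutive a (Nat.zero_le 1) (by omega : 1 ≤ 2 * n),
    ← sum_Ico_consecutive a (by omega : 1 ≤ n) (by omega : n ≤ 2 * n),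
    sum_eq_sum_Ico_succ_bot (by omega : n < 2 * n), hreflect]
  simp only [Nat.Ico_succ_singleton, sum_singleton, Nat.cast_zero, zero_mul, zero_div, cos_zero,
    mul_div_cancel_left₀ π (Nat.cast_ne_zero.mpr hn), cos_pi, a]
  ring

theorem Complex.exp_int_mul_pi_div_mul_I_ne_one {n : ℕ} {k : ℤ} (hn : n ≠ 0)
    (hk : ¬ (2 * n : ℤ) ∣ k) : exp (k * π / n * I) ≠ 1 := by
  contrapose hk
  obtain ⟨m, hm⟩ := exp_eq_one_iff.mp hk
  refine ⟨m, (@Int.cast_inj ℂ _ _).mp ?_⟩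
  linear_combination (norm := (push_cast; field [show (n : ℂ) ≠ 0 by aesop])) hm * (n / π / I)

theorem sum_range_two_mul_cos_int_mul_eq_zero {n : ℕ} {k : ℤ} (hk : ¬ (2 * n : ℤ) ∣ k) :
    ∑ j ∈ range (2 * n), cos (k * (j * π / n)) = 0 := by
  rcases eq_or_ne n 0 with rfl | hn
  · simp
  set z := Complex.exp (k * π / n * Complex.I)
  have hz : z ^ (2 * n) = 1 := by
    rw [← Complex.exp_nat_mul, show ((2 * n : ℕ) : ℂ) * (k * π / n * Complex.I) =
      k * (2 * π * Complex.I) by push_cast; field_simp]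
    exact Complex.exp_int_mul_two_pi_mul_I k
  have hgeom : ∑ j ∈ range (2 * n), z ^ j = 0 := by
    rw [geom_sum_eq (Complex.exp_int_mul_pi_div_mul_I_ne_one hn hk), hz, sub_self, zero_div]
  have hre := congrArg Complex.re hgeom
  rw [Complex.re_sum, Complex.zero_re] at hre
  convert hre using 2 with j
  rw [← Complex.exp_nat_mul, show (j : ℂ) * (k * π / n * Complex.I) =
    ((k * (j * π / n) : ℝ) : ℂ) * Complex.I by push_cast; ring, Complex.exp_ofReal_mul_I_re]

namespace Polynomial.Chebyshev

theorem exists_eq_sum_smul_T_of_degree_lt {R : Type*} [Field R] [NeZero (2 : R)] {P : R[X]}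
    {m : ℕ} (hP : P.degree < m) : ∃ c : ℕ → R, ∑ k ∈ range m, c k • T R k = P := by
  have hmem : P ∈ degreeLT R m := mem_degreeLT.mpr hP
  rw [← Sequence.span_degreeLT (chebyshevTsequence R)
      (fun k _ ↦ isUnit_iff_ne_zero.mpr (leadingCoeff_ne_zero.mpr (T_ne_zero R k))),
    show Set.Iio m = range m by simp, Submodule.mem_span_image_finset_iff_exists_fun'] at hmem
  exact hmem

noncomputable def sumLobatto (n : ℕ) (P : ℝ[X]) : ℝ :=
  (π / n) * ((1 / 2) * P.eval (-1) + ∑ j ∈ Ico 1 n, P.eval (cos (j * π / n)) + (1 / 2) * P.eval 1)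

theorem sumLobatto_eq_sum_range_two_mul {n : ℕ} (hn : n ≠ 0) (P : ℝ[X]) :
    sumLobatto n P = π / (2 * n) * ∑ j ∈ range (2 * n), P.eval (cos (j * π / n)) := by
  rw [sumLobatto, sum_range_two_mul_comp_cos_mul_pi_div (P.eval ·) hn]
  field_simp
  ring

theorem sumLobatto_sum (n : ℕ) {ι : Type*} (s : Finset ι) (P : ι → ℝ[X]) :
    sumLobatto n (∑ i ∈ s, P i) = ∑ i ∈ s, sumLobatto n (P i) := by
  simp only [sumLobatto, eval_finsetSum, ← mul_sum, sum_add_distrib]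
  rw [sum_comm]

theorem sumLobatto_smul (n : ℕ) (c : ℝ) (P : ℝ[X]) :
    sumLobatto n (c • P) = c * sumLobatto n P := by
  simp only [sumLobatto, eval_smul, smul_eq_mul, ← mul_sum]
  ring

theorem sumLobatto_T_zero {n : ℕ} (hn : n ≠ 0) : sumLobatto n (T ℝ 0) = π := by
  rw [sumLobatto_eq_sum_range_two_mul hn]
  simp only [T_zero, eval_one, sum_const, card_range, nsmul_eq_mul, Nat.cast_mul, Nat.cast_ofNat,
    mul_one]
  field_simp

theorem sumLobatto_T_of_not_dvd {n : ℕ} {k : ℤ} (hk : ¬ (2 * n : ℤ) ∣ k) :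
    sumLobatto n (T ℝ k) = 0 := by
  rcases eq_or_ne n 0 with rfl | hn
  · simp [sumLobatto]
  simp only [sumLobatto_eq_sum_range_two_mul hn, T_real_cos,
    sum_range_two_mul_cos_int_mul_eq_zero hk, mul_zero]

theorem integral_eval_T_real_measureT_eq_sumLobatto {n k : ℕ} (hn : n ≠ 0) (hk : k < 2 * n) :
    ∫ x, (T ℝ k).eval x ∂measureT = sumLobatto n (T ℝ k) := by
  rcases eq_or_ne k 0 with rfl | hk0
  · rw [Nat.cast_zero, integral_eval_T_real_measureT_zero, sumLobatto_T_zero hn]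
  · have hndvd : ¬ (2 * n : ℤ) ∣ k := by
      exact_mod_cast Nat.not_dvd_of_pos_of_lt (Nat.pos_of_ne_zero hk0) hk
    rw [integral_eval_T_real_measureT_of_ne_zero (by exact_mod_cast hk0),
      sumLobatto_T_of_not_dvd hndvd]

theorem integral_eq_sumLobatto {n : ℕ} {P : ℝ[X]} (hn : n ≠ 0) (hP : P.degree < 2 * n) :
    ∫ x, P.eval x ∂measureT = sumLobatto n P := by
  obtain ⟨c, rfl⟩ := exists_eq_sum_smul_T_of_degree_lt hP
  have hint (k : ℕ) : Integrable (fun x ↦ (c k • T ℝ k).eval x) measureT :=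
    integrable_measureT (by fun_prop)
  simp only [eval_finsetSum]
  rw [integral_finsetSum _ fun k _ ↦ hint k, sumLobatto_sum]
  refine sum_congr rfl fun k hk ↦ ?_
  simp only [eval_smul, smul_eq_mul, integral_const_mul, sumLobatto_smul,
    integral_eval_T_real_measureT_eq_sumLobatto hn (mem_range.mp hk)]

theorem setIntegral_Ioo_mul_inv_pi_mul_sqrt (g : ℝ → ℝ) :
    ∫ x in Set.Ioo (-1 : ℝ) 1, g x * (π * √(1 - x ^ 2))⁻¹ = π⁻¹ * ∫ x, g x ∂measureT := by
  rw [integral_measureT, intervalIntegral.integral_of_le (by norm_num),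
    integral_Ioc_eq_integral_Ioo, ← integral_const_mul]
  congr! 2 with x
  rw [mul_inv, sqrt_inv]
  ring

end Polynomial.Chebyshev

open Polynomial.Chebyshev in
theorem gauss_chebyshev_lobatto_quadrature (n : ℕ) (hn : 1 ≤ n)
    (f : Polynomial ℝ) (hf : f.natDegree ≤ 2 * n - 1) :
    ∫ x in Set.Ioo (-1 : ℝ) 1, f.eval x * (π * Real.sqrt (1 - x ^ 2))⁻¹ =
      (1 / (n : ℝ)) *
        ((1 / 2) * f.eval (-1) +
          (∑ j ∈ Finset.Ico 1 n, f.eval (Real.cos ((j : ℝ) * π / n))) +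
          (1 / 2) * f.eval 1) := by
  have hdeg : f.degree < 2 * n :=
    degree_le_natDegree.trans_lt (by exact_mod_cast (by omega : f.natDegree < 2 * n))
  rw [setIntegral_Ioo_mul_inv_pi_mul_sqrt, integral_eq_sumLobatto (by omega) hdeg, sumLobatto]
  field_simp
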